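/- arXiv:1205.5537 — 10 statements merged into one kernel-verified Lean document; each statement's English description precedes it below -/
import Mathlib

section
/- Let W be a dominating set of the Cartesian product of directed cycles C_m □ C_n (m, n ≥ 2). For each i in {0,...,n-1}, let a_i be the number of vertices of W lying in the i-th copy of C_m (i.e., vertices whose second coordinate is i). Then for all i (indices modulo n), a_{i-1} + 2·a_i ≥ m. -/
/-- Arc relation of the directed cycle on `ZMod m`: an arc from `x` to `x+1`. -/
def cycArc (m : ℕ) : ZMod m → ZMod m → Prop := fun x y => y = x + 1

/-- Arc relation of the Cartesian product of two digraphs given by arc relations. -/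
def prodArc {α β : Type*} (A : α → α → Prop) (B : β → β → Prop) :
    α × β → α × β → Prop :=
  fun u v => (A u.1 v.1 ∧ u.2 = v.2) ∨ (B u.2 v.2 ∧ u.1 = v.1)

/-- `W` is a dominating set: every vertex equals or is an out-neighbor of some vertex of `W`. -/
def IsDomSet {α : Type*} (A : α → α → Prop) (W : Set α) : Prop :=
  ∀ v, ∃ u ∈ W, u = v ∨ A u v

/-- The domination number of a digraph with arc relation `A`. -/
noncomputable def domNum (α : Type*) (A : α → α → Prop) : ℕ :=
  sInf {k | ∃ W : Set α, IsDomSet A W ∧ W.ncard = k}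

/-!
A vertex `(x, i)` can only be dominated by itself, by `(x - 1, i)` or by `(x, i - 1)`.
Writing `S j = {x | (x, j) ∈ W}`, the `m` first coordinates are therefore covered by
`S i ∪ (S i + 1) ∪ S (i - 1)`, a union of sets of sizes `a i`, `a i` and `a (i - 1)`.
-/

/-- No finiteness is needed: for infinite `α` the left side is the junk value `0`. -/
theorem Set.natCard_le_ncard_add_ncard_add_ncard {α : Type*} {s t u : Set α}
    (h : Set.univ ⊆ s ∪ t ∪ u) : Nat.card α ≤ s.ncard + t.ncard + u.ncard :=
  calc Nat.card α = (s ∪ t ∪ u).ncard := by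
        rw [Set.eq_univ_of_univ_subset h, Set.ncard_univ]
    _ ≤ (s ∪ t).ncard + u.ncard := Set.ncard_union_le _ _
    _ ≤ s.ncard + t.ncard + u.ncard := by gcongr; exact Set.ncard_union_le _ _

theorem ncard_setOf_mem_and_snd_eq {α β : Type*} (W : Set (α × β)) (j : β) :
    {v | v ∈ W ∧ v.2 = j}.ncard = ((·, j) ⁻¹' W).ncard := by
  have hrow : {v | v ∈ W ∧ v.2 = j} = (·, j) '' ((·, j) ⁻¹' W) := by
    ext ⟨x, k⟩
    constructor
    · rintro ⟨hv, rfl⟩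
      exact ⟨x, hv, rfl⟩
    · rintro ⟨y, hy, hyx⟩
      cases hyx
      exact ⟨hy, rfl⟩
  rw [hrow, Set.ncard_image_of_injective _ fun _ _ h => (Prod.mk.inj h).1]

theorem IsDomSet.univ_subset_row_cover {m n : ℕ} {W : Set (ZMod m × ZMod n)}
    (hW : IsDomSet (prodArc (cycArc m) (cycArc n)) W) (i : ZMod n) :
    Set.univ ⊆ (·, i) ⁻¹' W ∪ (· + 1) '' ((·, i) ⁻¹' W) ∪ (·, i - 1) ⁻¹' W := by
  intro x _
  obtain ⟨⟨y, j⟩, hyW, hdom⟩ := hW (x, i)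
  simp only [prodArc, cycArc, Prod.mk.injEq] at hdom
  rcases hdom with ⟨rfl, rfl⟩ | ⟨⟨rfl, rfl⟩ | ⟨rfl, rfl⟩⟩
  · exact Or.inl (Or.inl hyW)
  · exact Or.inl (Or.inr ⟨y, hyW, rfl⟩)
  · exact Or.inr (by simpa using hyW)

theorem stmt_0_general (m n : ℕ)
    (W : Set (ZMod m × ZMod n))
    (hW : IsDomSet (prodArc (cycArc m) (cycArc n)) W)
    (a : ZMod n → ℕ)
    (ha : ∀ i : ZMod n, a i = {v | v ∈ W ∧ v.2 = i}.ncard) :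
    ∀ i : ZMod n, m ≤ a (i - 1) + 2 * a i := by
  intro i
  have hcover := Set.natCard_le_ncard_add_ncard_add_ncard (hW.univ_subset_row_cover i)
  rw [Nat.card_zmod, Set.ncard_image_of_injective _ (add_left_injective 1)] at hcover
  rw [ha, ha, ncard_setOf_mem_and_snd_eq, ncard_setOf_mem_and_snd_eq]
  omega

theorem stmt_0 (m n : ℕ) (hm : 2 ≤ m) (hn : 2 ≤ n)
    (W : Set (ZMod m × ZMod n))
    (hW : IsDomSet (prodArc (cycArc m) (cycArc n)) W)
    (a : ZMod n → ℕ)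
    (ha : ∀ i : ZMod n, a i = {v | v ∈ W ∧ v.2 = i}.ncard) :
    ∀ i : ZMod n, m ≤ a (i - 1) + 2 * a i :=
  stmt_0_general m n W hW a ha
end

section
/- For m, n ≥ 2 with m ≡ 0 (mod 3), writing k_1 = m/3, the domination number of C_m □ C_n satisfies γ(C_m □ C_n) ≥ n·k_1. -/
/-!
Each vertex `(i, j)` of `C_m □ C_n` dominates only itself, `(i + 1, j)` and `(i, j + 1)`, so a
dominating set `W` satisfies `m n ≤ 3 |W|`; when `3 ∣ m` this is `n · m / 3 ≤ |W|`.
-/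

open Set

variable {α : Type*}

def closedOutNbhd (A : α → α → Prop) (u : α) : Set α := {v | u = v ∨ A u v}

lemma IsDomSet.biUnion_closedOutNbhd_eq_univ {A : α → α → Prop} {W : Set α}
    (hW : IsDomSet A W) : ⋃ u ∈ W, closedOutNbhd A u = univ :=
  eq_univ_of_forall fun v => by simpa [closedOutNbhd] using hW v

lemma IsDomSet.natCard_le_mul_ncard [Finite α] {A : α → α → Prop} {W : Set α} {d : ℕ}
    (hA : ∀ u, (closedOutNbhd A u).ncard ≤ d) (hW : IsDomSet A W) :
    Nat.card α ≤ d * W.ncard := by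
  have hWf : W.Finite := W.toFinite
  calc Nat.card α = (⋃ u ∈ W, closedOutNbhd A u).ncard := by
        rw [hW.biUnion_closedOutNbhd_eq_univ, ncard_univ]
    _ ≤ ∑ u ∈ hWf.toFinset, (closedOutNbhd A u).ncard := by
        simpa using hWf.toFinset.set_ncard_biUnion_le (closedOutNbhd A)
    _ ≤ ∑ _u ∈ hWf.toFinset, d := Finset.sum_le_sum fun u _ => hA u
    _ = d * W.ncard := by
        rw [Finset.sum_const, smul_eq_mul, mul_comm, ncard_eq_toFinset_card W hWf]

lemma natCard_le_mul_domNum {A : α → α → Prop} {d : ℕ}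
    (hA : ∀ u, (closedOutNbhd A u).ncard ≤ d) : Nat.card α ≤ d * domNum α A := by
  cases finite_or_infinite α
  · obtain ⟨W, hW, hWcard⟩ : domNum α A ∈ {k | ∃ W : Set α, IsDomSet A W ∧ W.ncard = k} :=
      Nat.sInf_mem ⟨_, univ, fun v => ⟨v, trivial, Or.inl rfl⟩, rfl⟩
    exact hWcard ▸ hW.natCard_le_mul_ncard hA
  · simp [Nat.card_eq_zero_of_infinite]

lemma ncard_closedOutNbhd_prodArc_cycArc_le {m n : ℕ} (u : ZMod m × ZMod n) :
    (closedOutNbhd (prodArc (cycArc m) (cycArc n)) u).ncard ≤ 3 := by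
  have hsub : closedOutNbhd (prodArc (cycArc m) (cycArc n)) u ⊆
      ↑({u, (u.1 + 1, u.2), (u.1, u.2 + 1)} : Finset (ZMod m × ZMod n)) := by
    rintro v (rfl | ⟨h1 : v.1 = u.1 + 1, h2⟩ | ⟨h2 : v.2 = u.2 + 1, h1⟩) <;>
      simp [Prod.ext_iff, *]
  exact (ncard_le_ncard hsub).trans ((ncard_coe_finset _).trans_le Finset.card_le_three)

theorem stmt_1_general (m n k₁ : ℕ)
    (hmod : m % 3 = 0) (hk₁ : k₁ = m / 3) :
    n * k₁ ≤ domNum (ZMod m × ZMod n) (prodArc (cycArc m) (cycArc n)) := by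
  have h := natCard_le_mul_domNum (ncard_closedOutNbhd_prodArc_cycArc_le (m := m) (n := n))
  rw [Nat.card_prod, Nat.card_zmod, Nat.card_zmod] at h
  obtain ⟨k, rfl⟩ := Nat.dvd_of_mod_eq_zero hmod
  rw [hk₁, Nat.mul_div_cancel_left k three_pos]
  nlinarith

theorem stmt_1 (m n k₁ : ℕ) (hm : 2 ≤ m) (hn : 2 ≤ n)
    (hmod : m % 3 = 0) (hk₁ : k₁ = m / 3) :
    n * k₁ ≤ domNum (ZMod m × ZMod n) (prodArc (cycArc m) (cycArc n)) :=
  stmt_1_general m n k₁ hmod hk₁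
end

section
/- For m, n ≥ 2 with m ≡ 1 (mod 3), writing k_1 = ⌊m/3⌋, the domination number of C_m □ C_n satisfies γ(C_m □ C_n) ≥ n·k_1 + n/2. -/
/-!
Let `W` be a minimum dominating set and `w j` the number of its vertices in column
`ZMod m × {j}`. A vertex of `W` in column `j` dominates at most two vertices of that column, one in
column `j - 1` exactly one, and no other vertex dominates it; hence `m ≤ w (j - 1) + 2 * w j`.
For `m = 3 k₁ + 1` the excesses `a j = w j - k₁` satisfy `a (j - 1) + 2 * a j ≥ 1`, and for
integers this forces `2 * a j - 1 ≥ max (a j) 0 - max (a (j - 1)) 0`. The right-hand side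
telescopes around the cycle, so `n ≤ 2 * ∑ j, a j = 2 * (|W| - n * k₁)`.
-/

open Finset

theorem card_le_two_mul_sum_of_one_le_add_two_mul {G : Type*} [AddGroup G] [Fintype G]
    (a : G → ℤ) (g : G) (h : ∀ j, 1 ≤ a (j - g) + 2 * a j) :
    (Fintype.card G : ℤ) ≤ 2 * ∑ j, a j := by
  have potential : ∀ j, max (a j) 0 - max (a (j - g)) 0 ≤ 2 * a j - 1 := fun j => by
    have := h j
    omega
  have shift : ∑ j, max (a (j - g)) 0 = ∑ j, max (a j) 0 :=
    Fintype.sum_equiv (Equiv.subRight g) _ _ fun _ => rfl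
  have := Finset.sum_le_sum fun j (_ : j ∈ univ) => potential j
  rw [sum_sub_distrib, sum_sub_distrib, shift, ← mul_sum, sum_const, card_univ,
    nsmul_eq_mul, mul_one, sub_self] at this
  linarith

theorem exists_finset_isDomSet_card_eq_domNum {α : Type*} [Fintype α] (A : α → α → Prop) :
    ∃ W : Finset α, IsDomSet A W ∧ W.card = domNum α A := by
  have hne : {k | ∃ W : Set α, IsDomSet A W ∧ W.ncard = k}.Nonempty :=
    ⟨_, Set.univ, fun v => ⟨v, trivial, Or.inl rfl⟩, rfl⟩
  obtain ⟨W, hW, hcard⟩ := Nat.sInf_mem hne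
  classical
  exact ⟨W.toFinset, by simpa using hW, by rw [← Set.ncard_eq_toFinset_card', hcard, domNum]⟩

theorem IsDomSet.card_le_card_filter_sub_one_add_two_mul {α : Type*} [Fintype α] [DecidableEq α]
    {n : ℕ} (f : α → α) {W : Finset (α × ZMod n)}
    (hW : IsDomSet (prodArc (fun x y => y = f x) (cycArc n)) W) (j : ZMod n) :
    Fintype.card α ≤ #{u ∈ W | u.2 = j - 1} + 2 * #{u ∈ W | u.2 = j} := by
  set here := {u ∈ W | u.2 = j}
  set before := {u ∈ W | u.2 = j - 1}
  have cover : univ ⊆ (here.image Prod.fst ∪ here.image (f ∘ Prod.fst)) ∪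
      before.image Prod.fst := by
    intro x _
    obtain ⟨u, huW, hu⟩ := hW (x, j)
    have huW : u ∈ W := huW
    simp only [mem_union, mem_image, mem_filter, Function.comp_apply, here, before]
    rcases hu with rfl | ⟨hx, hj⟩ | ⟨hj, hx⟩
    · exact Or.inl (Or.inl ⟨_, ⟨huW, rfl⟩, rfl⟩)
    · exact Or.inl (Or.inr ⟨u, ⟨huW, hj⟩, hx.symm⟩)
    · exact Or.inr ⟨u, ⟨huW, eq_sub_of_add_eq hj.symm⟩, hx⟩
  calc Fintype.card α
      ≤ #(here.image Prod.fst ∪ here.image (f ∘ Prod.fst) ∪ before.image Prod.fst) :=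
        card_le_card cover
    _ ≤ #(here.image Prod.fst) + #(here.image (f ∘ Prod.fst)) + #(before.image Prod.fst) :=
        (card_union_le _ _).trans (Nat.add_le_add_right (card_union_le _ _) _)
    _ ≤ #here + #here + #before := by gcongr <;> exact card_image_le
    _ = #before + 2 * #here := by ring

theorem stmt_2_general (m n k₁ : ℕ) (hmod : m % 3 = 1) (hk₁ : k₁ = m / 3) :
    (n * k₁ : ℚ) + n / 2 ≤
      (domNum (ZMod m × ZMod n) (prodArc (cycArc m) (cycArc n)) : ℚ) := by
  obtain rfl | hn := eq_or_ne n 0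
  · simp
  have : NeZero m := ⟨by omega⟩
  have : NeZero n := ⟨hn⟩
  obtain ⟨W, hW, hcard⟩ := exists_finset_isDomSet_card_eq_domNum (prodArc (cycArc m) (cycArc n))
  set w : ZMod n → ℕ := fun j => #{u ∈ W | u.2 = j}
  have hcol (j : ZMod n) : 1 ≤ ((w (j - 1) : ℤ) - k₁) + 2 * ((w j : ℤ) - k₁) := by
    have := hW.card_le_card_filter_sub_one_add_two_mul (· + 1) j
    rw [ZMod.card] at this
    change m ≤ w (j - 1) + 2 * w j at this
    omega
  have hsum : ∑ j, ((w j : ℤ) - k₁) = W.card - n * k₁ := by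
    rw [sum_sub_distrib, card_eq_sum_card_fiberwise (fun u _ => mem_univ u.2)]
    simp [w]
  have key := card_le_two_mul_sum_of_one_le_add_two_mul (fun j => (w j : ℤ) - k₁) 1 hcol
  rw [hsum, ZMod.card, hcard] at key
  have key' : (n : ℚ) ≤ 2 * (domNum _ (prodArc (cycArc m) (cycArc n)) - n * k₁) := by
    exact_mod_cast key
  linarith

theorem stmt_2 (m n k₁ : ℕ) (hm : 2 ≤ m) (hn : 2 ≤ n)
    (hmod : m % 3 = 1) (hk₁ : k₁ = m / 3) :
    (n * k₁ : ℚ) + n / 2 ≤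
      (domNum (ZMod m × ZMod n) (prodArc (cycArc m) (cycArc n)) : ℚ) :=
  stmt_2_general m n k₁ hmod hk₁
end

section
/- For m, n ≥ 2 with m ≡ 2 (mod 3), writing k_1 = ⌊m/3⌋, the domination number of C_m □ C_n satisfies γ(C_m □ C_n) ≥ n·(k_1 + 1). -/
/-!
Let `W` dominate the torus and let `a j` be the number of vertices of `W` in column `j`
(second coordinate `j`). The `m` vertices of column `j` are dominated only from columns `j`
and `j - 1`, a vertex of column `j` dominating two of them and one of column `j - 1` one,
so `m ≤ 2 a j + a (j - 1)`. With `m = 3k + 2` the deficits `c j = a j - (k + 1)` satisfy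
`2 c j + c (j - 1) ≥ -1`, which forces `∑ c j ≥ 0`: a negative `c j` pairs with
`c (j - 1) ≥ -1 - 2 c j ≥ 1` to a nonnegative sum, and distinct `j` have distinct partners.
-/

open Finset Function

theorem sum_nonneg_of_neg_one_le_two_mul_add {ι : Type*} [Fintype ι] {f : ι → ι}
    (hf : Injective f) (c : ι → ℤ) (hc : ∀ j, -1 ≤ 2 * c j + c (f j)) :
    0 ≤ ∑ j, c j := by
  classical
  set N := univ.filter (fun j => c j < 0)
  have hN : ∀ j ∈ N, c j < 0 := fun j hj => (mem_filter.mp hj).2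
  have hdisj : Disjoint N (N.image f) := by
    refine disjoint_left.2 fun x hx hx' => ?_
    obtain ⟨j, hj, rfl⟩ := mem_image.1 hx'
    have := hc j; have := hN j hj; have := hN _ hx; omega
  have hpaired : 0 ≤ ∑ x ∈ N ∪ N.image f, c x := by
    rw [sum_union hdisj, sum_image hf.injOn, ← sum_add_distrib]
    exact sum_nonneg fun j hj => by have := hc j; have := hN j hj; omega
  have hrest : 0 ≤ ∑ x ∈ (N ∪ N.image f)ᶜ, c x :=
    sum_nonneg fun j hj => not_lt.1 fun hneg =>
      mem_compl.1 hj (mem_union_left _ (mem_filter.2 ⟨mem_univ j, hneg⟩))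
  linarith [sum_add_sum_compl (N ∪ N.image f) c]

theorem le_domNum {α : Type*} {A : α → α → Prop} {b : ℕ}
    (h : ∀ W : Set α, IsDomSet A W → b ≤ W.ncard) : b ≤ domNum α A :=
  le_csInf ⟨_, Set.univ, fun v => ⟨v, trivial, Or.inl rfl⟩, rfl⟩ <| by
    rintro _ ⟨W, hW, rfl⟩
    exact h W hW

theorem eq_or_eq_of_prodArc_cycArc {m n : ℕ} {u v : ZMod m × ZMod n}
    (h : prodArc (cycArc m) (cycArc n) u v) : u = (v.1 - 1, v.2) ∨ u = (v.1, v.2 - 1) := by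
  rcases h with ⟨h1, h2⟩ | ⟨h1, h2⟩
  · exact Or.inl (Prod.ext (eq_sub_of_add_eq h1.symm) h2)
  · exact Or.inr (Prod.ext h2 (eq_sub_of_add_eq h1.symm))

theorem le_two_mul_card_column_add {m n : ℕ} [NeZero m] {W : Finset (ZMod m × ZMod n)}
    (hW : IsDomSet (prodArc (cycArc m) (cycArc n)) (W : Set (ZMod m × ZMod n))) (j : ZMod n) :
    m ≤ 2 * #{p ∈ W | p.2 = j} + #{p ∈ W | p.2 = j - 1} := by
  classical
  set S : ZMod n → Finset (ZMod m) := fun j => {p ∈ W | p.2 = j}.image Prod.fst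
  have hS_card : ∀ i, #(S i) ≤ #{p ∈ W | p.2 = i} := fun i => card_image_le
  have hcover : (univ : Finset (ZMod m)) ⊆ S j ∪ (S j).image (· + 1) ∪ S (j - 1) := by
    intro x _
    obtain ⟨u, hu, hdom⟩ := hW (x, j)
    have hS : ∀ i, u.2 = i → u.1 ∈ S i := fun i hi =>
      mem_image_of_mem _ (mem_filter.2 ⟨hu, hi⟩)
    rcases hdom with rfl | harc
    · simp [hS]
    · rcases eq_or_eq_of_prodArc_cycArc harc with rfl | rfl
      · exact mem_union_left _ <| mem_union_right _ <| mem_image.2 ⟨_, hS j rfl, by simp⟩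
      · exact mem_union_right _ (hS _ rfl)
  calc m = #(univ : Finset (ZMod m)) := by simp
    _ ≤ #(S j) + #((S j).image (· + 1)) + #(S (j - 1)) :=
      (card_le_card hcover).trans <| (card_union_le _ _).trans <|
        Nat.add_le_add_right (card_union_le _ _) _
    _ ≤ #(S j) + #(S j) + #(S (j - 1)) :=
      Nat.add_le_add_right (Nat.add_le_add_left card_image_le _) _
    _ ≤ 2 * #{p ∈ W | p.2 = j} + #{p ∈ W | p.2 = j - 1} := by
      have := hS_card j; have := hS_card (j - 1); omega

theorem mul_le_card_of_isDomSet {m n : ℕ} [NeZero m] [NeZero n] (hmod : m % 3 = 2)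
    {W : Finset (ZMod m × ZMod n)}
    (hW : IsDomSet (prodArc (cycArc m) (cycArc n)) (W : Set (ZMod m × ZMod n))) :
    n * (m / 3 + 1) ≤ #W := by
  set a : ZMod n → ℕ := fun j => #{p ∈ W | p.2 = j}
  have hcard : #W = ∑ j, a j := card_eq_sum_card_fiberwise fun p _ => mem_univ p.2
  have hcol : ∀ j, m ≤ 2 * a j + a (j - 1) := le_two_mul_card_column_add hW
  have hdeficit := sum_nonneg_of_neg_one_le_two_mul_add (sub_left_injective (b := 1))
    (fun j => (a j : ℤ) - (m / 3 + 1 : ℕ))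
    fun j => by have := hcol j; omega
  rw [sum_sub_distrib, sum_const, card_univ, ZMod.card, nsmul_eq_mul] at hdeficit
  zify [hcard]
  push_cast at hdeficit ⊢
  linarith

theorem stmt_3_general (m n k₁ : ℕ)
    (hmod : m % 3 = 2) (hk₁ : k₁ = m / 3) :
    n * (k₁ + 1) ≤ domNum (ZMod m × ZMod n) (prodArc (cycArc m) (cycArc n)) := by
  classical
  subst hk₁
  rcases Nat.eq_zero_or_pos n with rfl | hn
  · simp
  have : NeZero m := ⟨by omega⟩
  have : NeZero n := ⟨hn.ne'⟩
  refine le_domNum fun W hW => ?_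
  rw [Set.ncard_eq_toFinset_card']
  exact mul_le_card_of_isDomSet hmod (by simpa using hW)

theorem stmt_3 (m n k₁ : ℕ) (hm : 2 ≤ m) (hn : 2 ≤ n)
    (hmod : m % 3 = 2) (hk₁ : k₁ = m / 3) :
    n * (k₁ + 1) ≤ domNum (ZMod m × ZMod n) (prodArc (cycArc m) (cycArc n)) :=
  stmt_3_general m n k₁ hmod hk₁
end

section
/- Let m = 3k_1 + 2 and let A = {0} ∪ {2+3p : p = 0,...,k_1−1} ⊆ Z/mZ, and for i ∈ Z/mZ let A_i = {j : j − i (mod m) ∈ A}. Then for every i, the set of vertices of the directed cycle C_m not dominated by A_i equals {i+4, i+7, ..., i−4, i−1} (all arithmetic mod m), and this set is contained both in A_{i+2} and in A_{i−1}. -/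
/-! Everything is invariant under translation, so take `i = 0` and write a vertex as the residue
of some `n < m = 3k + 2`. Then `A` consists of `n = 0` and the `n ≡ 2 (mod 3)`, its out-neighbours
are `n = 1` and the `n ≥ 3` with `n ≡ 0`, so exactly the `n ≥ 4` with `n ≡ 1 (mod 3)` remain
undominated. For the inclusion in `A_{i-1}`: the progression `2 + 3p`, continued to `p = k`,
ends at `m ≡ 0`, which lies in `A` as well. -/

theorem exists_mem_eq_or_cycArc_iff {m : ℕ} (S : Set (ZMod m)) (v : ZMod m) :
    (∃ u ∈ S, u = v ∨ cycArc m u v) ↔ v ∈ S ∨ v - 1 ∈ S := by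
  constructor
  · rintro ⟨u, hu, rfl | rfl⟩
    · exact .inl hu
    · exact .inr (by rwa [add_sub_cancel_right])
  · rintro (hv | hv)
    · exact ⟨v, hv, .inl rfl⟩
    · exact ⟨v - 1, hv, .inr (sub_add_cancel v 1).symm⟩

theorem ZMod.natCast_eq_natCast_iff_of_lt {m a b : ℕ} (ha : a < m) (hb : b < m) :
    (a : ZMod m) = b ↔ a = b := by
  rw [ZMod.natCast_eq_natCast_iff', Nat.mod_eq_of_lt ha, Nat.mod_eq_of_lt hb]

theorem natCast_mem_image_add_mul_iff {m a d k n : ℕ} (hd : 0 < d) (hn : n < m)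
    (hlo : m ≤ a + d * k) (hhi : a + d * k < m + d) :
    (n : ZMod m) ∈ (fun p : ℕ => (a + d * p : ZMod m)) '' Set.Iio k ↔
      a ≤ n ∧ n % d = a % d := by
  constructor
  · rintro ⟨p, hp, hpn⟩
    have hlt : a + d * p < m := by
      have : d * p + d ≤ d * k := by nlinarith [Set.mem_Iio.mp hp]
      omega
    dsimp only at hpn
    rw [← Nat.cast_mul, ← Nat.cast_add, ZMod.natCast_eq_natCast_iff_of_lt hlt hn] at hpn
    subst hpn
    simp
  · rintro ⟨han, hmod⟩
    have hdvd : d ∣ n - a := Nat.dvd_of_mod_eq_zero (Nat.sub_mod_eq_zero_of_mod_eq hmod)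
    refine ⟨(n - a) / d, (Nat.div_lt_iff_lt_mul hd).mpr (by rw [mul_comm]; omega), ?_⟩
    dsimp only
    rw [← Nat.cast_mul, ← Nat.cast_add, Nat.mul_div_cancel' hdvd, Nat.add_sub_cancel' han]

section

variable {m k : ℕ} (hm : m = 3 * k + 2) {A : Set (ZMod m)}
  (hA : A = {0} ∪ (fun p : ℕ => (2 + 3 * p : ZMod m)) '' Set.Iio k)
include hm hA

theorem natCast_mem_iff {n : ℕ} (hn : n < m) :
    (n : ZMod m) ∈ A ↔ n = 0 ∨ 2 ≤ n ∧ n % 3 = 2 := by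
  have h := natCast_mem_image_add_mul_iff (a := 2) (d := 3) (k := k) three_pos hn
    (by omega) (by omega)
  simp only [Nat.cast_ofNat] at h
  rw [hA, Set.mem_union, h, Set.mem_singleton_iff, ← Nat.cast_zero,
    ZMod.natCast_eq_natCast_iff_of_lt hn (by omega)]

theorem notMem_and_sub_one_notMem_iff (w : ZMod m) :
    w ∉ A ∧ w - 1 ∉ A ↔ w ∈ (fun p : ℕ => (4 + 3 * p : ZMod m)) '' Set.Iio k := by
  have : NeZero m := ⟨by omega⟩
  obtain ⟨n, hn, rfl⟩ : ∃ n < m, (n : ZMod m) = w := ⟨w.val, w.val_lt, w.natCast_zmod_val⟩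
  have hP := natCast_mem_image_add_mul_iff (a := 4) (d := 3) (k := k) three_pos hn
    (by omega) (by omega)
  simp only [Nat.cast_ofNat] at hP
  rw [hP, natCast_mem_iff hm hA hn]
  rcases n with _ | n
  · simp
  · rw [Nat.cast_succ, add_sub_cancel_right, natCast_mem_iff hm hA (by omega)]
    omega

theorem two_add_three_mul_mem {p : ℕ} (hp : p ≤ k) : (2 + 3 * p : ZMod m) ∈ A := by
  rw [hA]
  rcases hp.lt_or_eq with hp | rfl
  · exact .inr ⟨p, hp, rfl⟩
  · have : ((3 * p + 2 : ℕ) : ZMod m) = 0 := by rw [← hm, ZMod.natCast_self]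
    push_cast at this
    exact .inl (Set.mem_singleton_iff.mpr (by linear_combination this))

end

theorem stmt_5 (m k₁ : ℕ) (hm : m = 3 * k₁ + 2)
    (A : Set (ZMod m))
    (hA : A = {0} ∪ (fun p : ℕ => (2 + 3 * p : ZMod m)) '' Set.Iio k₁)
    (Atr : ZMod m → Set (ZMod m))
    (hAtr : ∀ i : ZMod m, Atr i = {j | j - i ∈ A}) :
    ∀ i : ZMod m,
      {v : ZMod m | ¬ ∃ u ∈ Atr i, u = v ∨ cycArc m u v} =
        (fun p : ℕ => (i + 4 + 3 * p : ZMod m)) '' Set.Iio k₁ ∧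
      (fun p : ℕ => (i + 4 + 3 * p : ZMod m)) '' Set.Iio k₁ ⊆ Atr (i + 2) ∧
      (fun p : ℕ => (i + 4 + 3 * p : ZMod m)) '' Set.Iio k₁ ⊆ Atr (i - 1) := by
  intro i
  have mem_Atr (j v : ZMod m) : v ∈ Atr j ↔ v - j ∈ A := by rw [hAtr]; rfl
  refine ⟨?_, ?_, ?_⟩
  · ext v
    have hshift : v ∈ (fun p : ℕ => (i + 4 + 3 * p : ZMod m)) '' Set.Iio k₁ ↔
        v - i ∈ (fun p : ℕ => (4 + 3 * p : ZMod m)) '' Set.Iio k₁ := by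
      constructor <;> rintro ⟨p, hp, h⟩ <;> exact ⟨p, hp, by linear_combination h⟩
    rw [Set.mem_ofPred_eq, exists_mem_eq_or_cycArc_iff, mem_Atr, mem_Atr, sub_right_comm,
      hshift, ← notMem_and_sub_one_notMem_iff hm hA, not_or]
  · rintro _ ⟨p, hp, rfl⟩
    rw [mem_Atr]
    convert two_add_three_mul_mem hm hA hp.le using 1
    ring
  · rintro _ ⟨p, hp, rfl⟩
    rw [mem_Atr]
    convert two_add_three_mul_mem hm hA (Nat.succ_le_of_lt hp) using 1
    push_cast
    ring
end

section
/- Let m = 3k_1 + 2 ≥ 2 and n ≥ 2. Let A = {0} ∪ {2+3p : p = 0,...,k_1−1} ⊆ Z/mZ and A_i its translate by i. Suppose S ⊆ V(C_m □ C_n) satisfies: for each j ∈ {0,...,n−1} there is an index i_j ∈ Z/mZ with S ∩ C_m^j = A_{i_j} × {j}, and for each j (indices of columns taken mod n) i_j ≡ i_{j−1} + 1 (mod m) or i_j ≡ i_{j−1} − 2 (mod m). Then S is a dominating set of C_m □ C_n. -/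
/-
Write `a = x - i_j` for a vertex `(x, j)`. If `a ∈ A` the vertex lies in `S`; if `a - 1 ∈ A` it is
dominated from below in its column. The only residues left are `a ≡ 1 (mod 3)` with `a ≠ 1`, and for
those both `a + 1` and `a - 2` lie in `A` (for `a = m - 1` because `a + 1 = 0`). Since
`i_{j-1} = i_j - 1` or `i_j + 2`, one of them shows `(x, j - 1) ∈ S`, which dominates `(x, j)`.
-/

def stepPattern (m k : ℕ) : Set (ZMod m) :=
  {0} ∪ (fun p : ℕ => (2 + 3 * p : ZMod m)) '' Set.Iio k

theorem isDomSet_prodArc_of_columns {m n : ℕ} (A : Set (ZMod m))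
    (hA : ∀ a, a ∈ A ∨ a - 1 ∈ A ∨ (a + 1 ∈ A ∧ a - 2 ∈ A))
    (S : Set (ZMod m × ZMod n)) (idx : ZMod n → ZMod m)
    (hS : ∀ j : ZMod n, {k : ZMod m | (k, j) ∈ S} = {x | x - idx j ∈ A})
    (hstep : ∀ j : ZMod n, idx j = idx (j - 1) + 1 ∨ idx j = idx (j - 1) - 2) :
    IsDomSet (prodArc (cycArc m) (cycArc n)) S := by
  have mem_iff (x : ZMod m) (j : ZMod n) : (x, j) ∈ S ↔ x - idx j ∈ A :=
    Set.ext_iff.mp (hS j) x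
  rintro ⟨x, j⟩
  rcases hA (x - idx j) with hself | hbelow | ⟨hup, hdown⟩
  · exact ⟨(x, j), (mem_iff x j).mpr hself, Or.inl rfl⟩
  · refine ⟨(x - 1, j), (mem_iff _ _).mpr ?_, Or.inr (Or.inl ⟨by simp [cycArc], rfl⟩)⟩
    rwa [sub_right_comm]
  · refine ⟨(x, j - 1), (mem_iff _ _).mpr ?_, Or.inr (Or.inr ⟨by simp [cycArc], rfl⟩)⟩
    rcases hstep j with h | h
    · rwa [show x - idx (j - 1) = x - idx j + 1 by rw [h]; ring]
    · rwa [show x - idx (j - 1) = x - idx j - 2 by rw [h]; ring]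

theorem natCast_mem_stepPattern {k r : ℕ}
    (hr : r = 0 ∨ r = 3 * k + 2 ∨ (r % 3 = 2 ∧ r < 3 * k + 2)) :
    (r : ZMod (3 * k + 2)) ∈ stepPattern (3 * k + 2) k := by
  rcases hr with rfl | rfl | ⟨hmod, hlt⟩
  · exact Or.inl (by simp)
  · exact Or.inl (ZMod.natCast_self _)
  · refine Or.inr ⟨r / 3, by simp only [Set.mem_Iio]; omega, ?_⟩
    conv_rhs => rw [← Nat.div_add_mod r 3, hmod]
    push_cast
    ring

theorem stepPattern_cover (k : ℕ) (a : ZMod (3 * k + 2)) :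
    a ∈ stepPattern _ k ∨ a - 1 ∈ stepPattern _ k ∨
      (a + 1 ∈ stepPattern _ k ∧ a - 2 ∈ stepPattern _ k) := by
  obtain ⟨r, hr, rfl⟩ : ∃ r < 3 * k + 2, (r : ZMod (3 * k + 2)) = a :=
    ⟨a.val, a.val_lt, a.natCast_zmod_val⟩
  rcases (by omega : (r = 0 ∨ r % 3 = 2) ∨ (1 ≤ r ∧ (r - 1 = 0 ∨ (r - 1) % 3 = 2)) ∨
      (2 ≤ r ∧ (r + 1 = 3 * k + 2 ∨ (r + 1) % 3 = 2 ∧ r + 1 < 3 * k + 2) ∧ (r - 2) % 3 = 2))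
    with hself | ⟨h1, hbelow⟩ | ⟨h2, hup, hdown⟩
  · exact Or.inl (natCast_mem_stepPattern (by omega))
  · refine Or.inr (Or.inl ?_)
    simpa [Nat.cast_sub h1] using natCast_mem_stepPattern (r := r - 1) (by omega)
  · refine Or.inr (Or.inr ⟨by simpa using natCast_mem_stepPattern (r := r + 1) (by omega), ?_⟩)
    simpa [Nat.cast_sub h2] using natCast_mem_stepPattern (r := r - 2) (by omega)

theorem stmt_6_general (m n k₁ : ℕ) (hm : m = 3 * k₁ + 2)
    (A : Set (ZMod m))
    (hA : A = {0} ∪ (fun p : ℕ => (2 + 3 * p : ZMod m)) '' Set.Iio k₁)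
    (S : Set (ZMod m × ZMod n)) (idx : ZMod n → ZMod m)
    (hS : ∀ j : ZMod n, {k : ZMod m | (k, j) ∈ S} = {x | x - idx j ∈ A})
    (hstep : ∀ j : ZMod n, idx j = idx (j - 1) + 1 ∨ idx j = idx (j - 1) - 2) :
    IsDomSet (prodArc (cycArc m) (cycArc n)) S := by
  subst hm hA
  exact isDomSet_prodArc_of_columns _ (stepPattern_cover k₁) S idx hS hstep

theorem stmt_6 (m n k₁ : ℕ) (hm : m = 3 * k₁ + 2) (hm2 : 2 ≤ m) (hn : 2 ≤ n)
    (A : Set (ZMod m))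
    (hA : A = {0} ∪ (fun p : ℕ => (2 + 3 * p : ZMod m)) '' Set.Iio k₁)
    (S : Set (ZMod m × ZMod n)) (idx : ZMod n → ZMod m)
    (hS : ∀ j : ZMod n, {k : ZMod m | (k, j) ∈ S} = {x | x - idx j ∈ A})
    (hstep : ∀ j : ZMod n, idx j = idx (j - 1) + 1 ∨ idx j = idx (j - 1) - 2) :
    IsDomSet (prodArc (cycArc m) (cycArc n)) S :=
  stmt_6_general m n k₁ hm A hA S idx hS hstep
end

section
/- Let m = 3k_1 + 2 ≥ 2 and n ≥ 2. If there exist nonnegative integers a, b with a + b = n − 1 and (a − 2b ≡ 2 (mod m) or a − 2b ≡ m − 1 (mod m)), then γ(C_m □ C_n) = n(k_1 + 1). -/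
/-!
Lower bound: each of the `m` vertices of column `j` is dominated from column `j`, whose
vertices cover at most two of them each, or from column `j - 1`, whose vertices cover one each.
So the column counts `w` satisfy `3k₁ + 2 ≤ w (j - 1) + 2 w j`; hence a column with fewer than
`k₁ + 1` vertices is preceded by one whose excess over `k₁ + 1` is at least that deficit, and
summing over `j` gives `∑ w ≥ n (k₁ + 1)`.

Upper bound: put `s j, s j + 3, …, s j + 3k₁` into column `j`; this dominates as soon as every step
`s (j + 1) - s j` is `1` or `-2`. Going `a` steps up by `1` and then `b` steps down by `2` reaches
`a - 2b`, and the congruence says exactly that one more step of `1` or `-2` closes the walk.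
-/

open Finset

theorem domNum_eq_of_isDomSet {α : Type*} {A : α → α → Prop} {N : ℕ}
    (hW : ∃ W, IsDomSet A W ∧ W.ncard = N) (hle : ∀ W, IsDomSet A W → N ≤ W.ncard) :
    domNum α A = N :=
  le_antisymm (Nat.sInf_le hW) (le_csInf ⟨N, hW⟩ (by rintro _ ⟨W, hW, rfl⟩; exact hle W hW))

theorem card_mul_succ_le_sum {ι : Type*} [Fintype ι] (σ : Equiv.Perm ι) (k : ℕ) (w : ι → ℕ)
    (h : ∀ j, 3 * k + 2 ≤ w (σ j) + 2 * w j) :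
    Fintype.card ι * (k + 1) ≤ ∑ j, w j := by
  set K := k + 1
  have deficit_le_excess : ∀ j, K - w j ≤ w (σ j) - K := fun j => by have := h j; omega
  have hsum : ∑ j, (K - w j) ≤ ∑ j, (w j - K) :=
    (sum_le_sum fun j _ => deficit_le_excess j).trans_eq (Equiv.sum_comp σ fun j => w j - K)
  have hmax : ∑ j, (w j + (K - w j)) = ∑ j, (K + (w j - K)) :=
    sum_congr rfl fun j _ => by omega
  simp only [sum_add_distrib, sum_const, card_univ, smul_eq_mul] at hmax
  omega

theorem ZMod.exists_eq_three_mul_add {m k : ℕ} (hm : m = 3 * k + 2) (x : ZMod m) :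
    ∃ i ≤ k, x = 3 * i ∨ x = 3 * i + 1 ∨ (i < k ∧ x = 3 * i + 2) := by
  have : NeZero m := ⟨by omega⟩
  obtain ⟨i, r, hr, hlt, rfl⟩ : ∃ i r, r < 3 ∧ 3 * i + r < m ∧ x = ((3 * i + r : ℕ) : ZMod m) :=
    ⟨x.val / 3, x.val % 3, Nat.mod_lt _ three_pos, by rw [Nat.div_add_mod]; exact x.val_lt,
      by rw [Nat.div_add_mod, ZMod.natCast_zmod_val]⟩
  refine ⟨i, by omega, ?_⟩
  interval_cases r
  · exact .inl (by push_cast; ring)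
  · exact .inr (.inl (by push_cast; ring))
  · exact .inr (.inr ⟨by omega, by push_cast; ring⟩)

theorem ZMod.forall_comp_val_add_one {n : ℕ} [NeZero n] {α : Type*} (f : ℕ → α)
    (R : α → α → Prop) (hstep : ∀ t, t + 1 < n → R (f t) (f (t + 1)))
    (hwrap : R (f (n - 1)) (f 0)) (j : ZMod n) : R (f j.val) (f (j + 1).val) := by
  obtain ⟨t, ht, rfl⟩ : ∃ t < n, j = (t : ZMod n) := ⟨j.val, j.val_lt, (natCast_zmod_val j).symm⟩
  rw [val_cast_of_lt ht, ← Nat.cast_add_one]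
  rcases (by omega : t + 1 < n ∨ t + 1 = n) with hlt | heq
  · rw [val_cast_of_lt hlt]
    exact hstep t hlt
  · rw [heq, natCast_self, val_zero, show t = n - 1 by omega]
    exact hwrap

section CycleProduct

variable {m n : ℕ}

theorem IsDomSet.le_card_column [NeZero m] {F : Finset (ZMod m × ZMod n)}
    (hF : IsDomSet (prodArc (cycArc m) (cycArc n)) (F : Set (ZMod m × ZMod n))) (j : ZMod n) :
    m ≤ #{u ∈ F | u.2 = j - 1} + 2 * #{u ∈ F | u.2 = j} := by
  set C := {u ∈ F | u.2 = j}
  set C' := {u ∈ F | u.2 = j - 1}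
  have hcover : (univ : Finset (ZMod m)) ⊆
      C.image Prod.fst ∪ C.image (·.1 + 1) ∪ C'.image Prod.fst := by
    intro x _
    obtain ⟨u, hu, rfl | ⟨hx, hj⟩ | ⟨hj, hx⟩⟩ := hF (x, j) <;> simp only [mem_union, mem_image]
    · exact .inl (.inl ⟨_, mem_filter.2 ⟨hu, rfl⟩, rfl⟩)
    · exact .inl (.inr ⟨u, mem_filter.2 ⟨hu, hj⟩, hx.symm⟩)
    · exact .inr ⟨u, mem_filter.2 ⟨hu, eq_sub_of_add_eq hj.symm⟩, hx⟩
  calc m = #(univ : Finset (ZMod m)) := by rw [card_univ, ZMod.card]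
    _ ≤ #(C.image Prod.fst ∪ C.image (·.1 + 1) ∪ C'.image Prod.fst) := card_le_card hcover
    _ ≤ #C + #C + #C' := (card_union_le _ _).trans <|
        add_le_add ((card_union_le _ _).trans (add_le_add card_image_le card_image_le))
          card_image_le
    _ = #C' + 2 * #C := by ring

theorem IsDomSet.mul_succ_le_ncard [NeZero n] {k : ℕ} (hm : m = 3 * k + 2)
    {W : Set (ZMod m × ZMod n)} (hW : IsDomSet (prodArc (cycArc m) (cycArc n)) W) :
    n * (k + 1) ≤ W.ncard := by
  have : NeZero m := ⟨by omega⟩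
  obtain ⟨F, rfl⟩ := W.toFinite.exists_finset_coe
  rw [Set.ncard_coe_finset,
    card_eq_sum_card_fiberwise (f := Prod.snd) (t := univ) fun _ _ => mem_univ _]
  simpa [ZMod.card] using card_mul_succ_le_sum (Equiv.subRight 1) k
    (fun j => #{u ∈ F | u.2 = j}) fun j => hm ▸ hW.le_card_column j

def shiftedColumns (k : ℕ) (s : ZMod n → ZMod m) : Set (ZMod m × ZMod n) :=
  Set.range fun p : ZMod n × Fin (k + 1) => (s p.1 + 3 * ((p.2 : ℕ) : ZMod m), p.1)

theorem ncard_shiftedColumns {k : ℕ} (hk : 3 * k < m) (s : ZMod n → ZMod m) :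
    (shiftedColumns k s).ncard = n * (k + 1) := by
  rw [shiftedColumns, Set.ncard_range_of_injective, Nat.card_prod, Nat.card_zmod, Nat.card_fin]
  rintro ⟨j, i⟩ ⟨j', i'⟩ h
  simp only [Prod.mk.injEq] at h
  obtain ⟨h1, rfl⟩ := h
  have := i.isLt
  have := i'.isLt
  have h3 : ((3 * i : ℕ) : ZMod m) = ((3 * i' : ℕ) : ZMod m) := by
    push_cast; exact add_left_cancel h1
  rw [ZMod.natCast_eq_natCast_iff', Nat.mod_eq_of_lt (by omega), Nat.mod_eq_of_lt (by omega)] at h3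
  exact Prod.ext rfl (Fin.ext (show (i : ℕ) = i' by omega))

theorem isDomSet_shiftedColumns {k : ℕ} (hm : m = 3 * k + 2) {s : ZMod n → ZMod m}
    (hs : ∀ j, s (j + 1) = s j + 1 ∨ s (j + 1) = s j - 2) :
    IsDomSet (prodArc (cycArc m) (cycArc n)) (shiftedColumns k s) := by
  rintro ⟨x, j⟩
  have mem : ∀ j' (i : ℕ), i ≤ k → (s j' + 3 * (i : ZMod m), j') ∈ shiftedColumns k s :=
    fun j' i hi => ⟨(j', ⟨i, by omega⟩), rfl⟩
  obtain ⟨i, hik, hx | hx | ⟨hik', hx⟩⟩ := ZMod.exists_eq_three_mul_add hm (x - s j)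
  · exact ⟨_, mem j i hik, .inl (Prod.ext (by linear_combination -hx) rfl)⟩
  · exact ⟨_, mem j i hik, .inr (.inl ⟨(by linear_combination hx : x = _ + 1), rfl⟩)⟩
  obtain ⟨j, rfl⟩ : ∃ j', j = j' + 1 := ⟨j - 1, by ring⟩
  rcases hs j with hup | hdown
  · refine ⟨_, mem j (i + 1) (by omega), .inr (.inr ⟨rfl, ?_⟩)⟩
    push_cast
    linear_combination -hx - hup
  · exact ⟨_, mem j i hik, .inr (.inr ⟨rfl, by linear_combination -hx - hdown⟩)⟩

theorem exists_closed_walk_of_sub_two_mul [NeZero n] {a b : ℕ} (hab : a + b = n - 1)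
    (hmod : (a : ZMod m) - 2 * b = 2 ∨ (a : ZMod m) - 2 * b = -1) :
    ∃ s : ZMod n → ZMod m, ∀ j, s (j + 1) = s j + 1 ∨ s (j + 1) = s j - 2 := by
  -- `t - a` truncates at `0`, so `f` climbs by `1` up to `t = a` and then falls by `2`.
  set f : ℕ → ZMod m := fun t => t - 3 * ((t - a : ℕ) : ZMod m)
  refine ⟨fun j => f j.val,
    ZMod.forall_comp_val_add_one f (fun x y => y = x + 1 ∨ y = x - 2) (fun t _ => ?_) ?_⟩
  · rcases lt_or_ge t a with hta | hta
    · left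
      simp only [f, Nat.sub_eq_zero_of_le hta.le, Nat.sub_eq_zero_of_le hta]
      push_cast; ring
    · right
      simp only [f, show t + 1 - a = t - a + 1 by omega]
      push_cast; ring
  · have hlast : f (n - 1) = a - 2 * b := by
      simp only [f, ← hab, Nat.add_sub_cancel_left]
      push_cast; ring
    have hfirst : f 0 = 0 := by simp [f]
    rw [hlast, hfirst]
    rcases hmod with h | h
    · exact .inr (by rw [h, sub_self])
    · exact .inl (by rw [h, neg_add_cancel])

end CycleProduct

theorem stmt_7_general (m n k₁ : ℕ) (hm : m = 3 * k₁ + 2) (hn : 2 ≤ n)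
    (a b : ℕ) (hab : a + b = n - 1)
    (hmod : (a : ℤ) - 2 * b ≡ 2 [ZMOD (m : ℤ)] ∨
            (a : ℤ) - 2 * b ≡ (m : ℤ) - 1 [ZMOD (m : ℤ)]) :
    domNum (ZMod m × ZMod n) (prodArc (cycArc m) (cycArc n)) = n * (k₁ + 1) := by
  have : NeZero n := ⟨by omega⟩
  have hmod' : (a : ZMod m) - 2 * b = 2 ∨ (a : ZMod m) - 2 * b = -1 := by
    rcases hmod with h | h <;> [left; right] <;>
      simpa using (ZMod.intCast_eq_intCast_iff _ _ _).mpr h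
  obtain ⟨s, hs⟩ := exists_closed_walk_of_sub_two_mul hab hmod'
  exact domNum_eq_of_isDomSet
    ⟨shiftedColumns k₁ s, isDomSet_shiftedColumns hm hs, ncard_shiftedColumns (by omega) s⟩
    fun W hW => hW.mul_succ_le_ncard hm

theorem stmt_7 (m n k₁ : ℕ) (hm : m = 3 * k₁ + 2) (hm2 : 2 ≤ m) (hn : 2 ≤ n)
    (a b : ℕ) (hab : a + b = n - 1)
    (hmod : (a : ℤ) - 2 * b ≡ 2 [ZMOD (m : ℤ)] ∨
            (a : ℤ) - 2 * b ≡ (m : ℤ) - 1 [ZMOD (m : ℤ)]) :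
    domNum (ZMod m × ZMod n) (prodArc (cycArc m) (cycArc n)) = n * (k₁ + 1) :=
  stmt_7_general m n k₁ hm hn a b hab hmod
end

section
/- Let m, n ≥ 2 with m ≡ 2 (mod 3), k_1 = ⌊m/3⌋, and n ≡ 0 (mod 3). Then γ(C_m □ C_n) = n(k_1 + 1). -/
/-!
Write `m = 3k + 2` and call the vertices `(x, y)` with `y` fixed column `y`. A dominator in
column `y` dominates at most two vertices of it and one in column `y - 1` exactly one, so
`m ≤ 2 a_y + a_(y-1)` where `a_y` counts the dominators in column `y`. Hence `a_y ≤ k` forces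
`a_y + a_(y-1) ≥ 2(k + 1)`, i.e. `min(a_y, k+1) + max(a_(y-1), k+1) ≥ 2(k + 1)` for every `y`;
summing around `C_n` gives `∑ a_y ≥ n(k + 1)`.

Conversely, put rows `3i + c(y)` (`i ≤ k`) into column `y`, where `c(y) ≡ y (mod 3)`; this is
consistent around `C_n` because `3 ∣ n`. A row not dominated inside its column is
`≡ c(y) - 1 ≡ c(y - 1)`, so it is dominated from column `y - 1`.
-/

open Finset

section Domination

variable {α : Type*} (A : α → α → Prop)

theorem domNum_le_ncard {W : Set α} (hW : IsDomSet A W) : domNum α A ≤ W.ncard :=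
  Nat.sInf_le ⟨W, hW, rfl⟩

theorem exists_isDomSet_ncard_eq_domNum : ∃ W, IsDomSet A W ∧ W.ncard = domNum α A :=
  Nat.sInf_mem (s := {k | ∃ W : Set α, IsDomSet A W ∧ W.ncard = k})
    ⟨_, Set.univ, fun v => ⟨v, trivial, Or.inl rfl⟩, rfl⟩

end Domination

theorem card_mul_le_sum_of_lt_imp_two_mul_le_add {ι : Type*} [Fintype ι] (e : Equiv.Perm ι)
    (a : ι → ℕ) (t : ℕ) (h : ∀ i, a i < t → 2 * t ≤ a i + a (e i)) :
    Fintype.card ι * t ≤ ∑ i, a i := by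
  have hpoint : ∀ i, 2 * t ≤ min (a i) t + max (a (e i)) t := fun i => by
    have := h i; omega
  have hshift : ∑ i, max (a (e i)) t = ∑ i, max (a i) t := Equiv.sum_comp e fun i => max (a i) t
  have key : Fintype.card ι * (2 * t) ≤ ∑ i, a i + Fintype.card ι * t := calc
    Fintype.card ι * (2 * t) = ∑ _i : ι, 2 * t := by simp
    _ ≤ ∑ i, (min (a i) t + max (a (e i)) t) := sum_le_sum fun i _ => hpoint i
    _ = ∑ i, (a i + t) := by
      rw [sum_add_distrib, hshift, ← sum_add_distrib]; simp only [min_add_max]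
    _ = ∑ i, a i + Fintype.card ι * t := by simp [sum_add_distrib]
  linarith

theorem card_le_two_mul_card_filter_add {m : ℕ} [NeZero m] {β : Type*} [DecidableEq β]
    (B : β → β → Prop) [DecidableRel B] (s : Finset (ZMod m × β))
    (hs : IsDomSet (prodArc (cycArc m) B) ↑s) (y : β) :
    m ≤ 2 * #{p ∈ s | p.2 = y} + #{p ∈ s | B p.2 y} := by
  set F := {p ∈ s | p.2 = y}
  set G := {p ∈ s | B p.2 y}
  have hcover : (univ : Finset (ZMod m)) ⊆
      F.image Prod.fst ∪ F.image (·.1 + 1) ∪ G.image Prod.fst := by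
    intro x _
    obtain ⟨u, hu, rfl | ⟨hx, hy⟩ | ⟨hy, hx⟩⟩ := hs (x, y)
    · exact mem_union_left _ <| mem_union_left _ <|
        mem_image.2 ⟨(x, y), mem_filter.2 ⟨hu, rfl⟩, rfl⟩
    · exact mem_union_left _ <| mem_union_right _ <|
        mem_image.2 ⟨u, mem_filter.2 ⟨hu, hy⟩, hx.symm⟩
    · exact mem_union_right _ (mem_image.2 ⟨u, mem_filter.2 ⟨hu, hy⟩, hx⟩)
  calc m = #(univ : Finset (ZMod m)) := by simp
    _ ≤ #F + #F + #G := (card_le_card hcover).trans <| (card_union_le _ _).trans <|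
        add_le_add ((card_union_le _ _).trans (add_le_add card_image_le card_image_le))
          card_image_le
    _ = 2 * #F + #G := by ring

theorem mul_succ_le_card_of_isDomSet {k n : ℕ} [NeZero n]
    (s : Finset (ZMod (3 * k + 2) × ZMod n))
    (hs : IsDomSet (prodArc (cycArc (3 * k + 2)) (cycArc n)) ↑s) : n * (k + 1) ≤ #s := by
  classical
  set a : ZMod n → ℕ := fun y => #{p ∈ s | p.2 = y}
  have hcol : ∀ y, 3 * k + 2 ≤ 2 * a y + a (y - 1) := fun y => by
    have hpred : {p ∈ s | cycArc n p.2 y} = {p ∈ s | p.2 = y - 1} :=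
      filter_congr fun p _ => by simp only [cycArc, eq_sub_iff_add_eq, eq_comm]
    simpa [a, hpred] using card_le_two_mul_card_filter_add (cycArc n) s hs y
  calc n * (k + 1) = Fintype.card (ZMod n) * (k + 1) := by rw [ZMod.card]
    _ ≤ ∑ y, a y :=
        card_mul_le_sum_of_lt_imp_two_mul_le_add (Equiv.subRight 1) a (k + 1) fun y hy => by
          have := hcol y; simp only [Equiv.subRight_apply]; omega
    _ = #s := (card_eq_sum_card_fiberwise fun _ _ => mem_univ _).symm

theorem mul_succ_le_domNum (k n : ℕ) [NeZero n] :
    n * (k + 1) ≤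
      domNum (ZMod (3 * k + 2) × ZMod n) (prodArc (cycArc (3 * k + 2)) (cycArc n)) := by
  obtain ⟨W, hW, hcard⟩ :=
    exists_isDomSet_ncard_eq_domNum (prodArc (cycArc (3 * k + 2)) (cycArc n))
  rw [← hcard, Set.ncard_eq_toFinset_card W W.toFinite]
  exact mul_succ_le_card_of_isDomSet _ (by rwa [Set.Finite.coe_toFinset])

section Construction

variable {n : ℕ} (h3 : 3 ∣ n)

/- Residue `2` is represented by `-1`, so that row `3k + 1 = -1` dominates row `0` across the
wrap-around of `C_(3k+2)`. -/
def columnOffset (y : ZMod n) : ℤ := (ZMod.castHom h3 (ZMod 3) y).valMinAbs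

theorem columnOffset_mem_Icc (y : ZMod n) :
    -1 ≤ columnOffset h3 y ∧ columnOffset h3 y ≤ 1 := by
  have := (ZMod.castHom h3 (ZMod 3) y).valMinAbs_mem_Ioc
  simp only [Set.mem_Ioc] at this
  unfold columnOffset
  omega

theorem dvd_columnOffset_sub_one (y : ZMod n) :
    (3 : ℤ) ∣ columnOffset h3 (y - 1) - columnOffset h3 y + 1 := by
  rw [← Nat.cast_ofNat, ← ZMod.intCast_zmod_eq_zero_iff_dvd]
  simp only [columnOffset, Int.cast_add, Int.cast_sub, Int.cast_one, ZMod.coe_valMinAbs, map_sub,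
    map_one]
  ring

theorem exists_fin_intCast_add_eq (k : ℕ) (x : ZMod (3 * k + 2)) {c : ℤ} {d : ℕ}
    (hc : -1 ≤ c ∧ c ≤ 1) (hd : d ≤ 1) (h : (3 : ℤ) ∣ x.val - c - d) :
    ∃ i : Fin (k + 1), (((3 * i + c : ℤ) : ZMod (3 * k + 2)) + d = x) := by
  obtain ⟨q, hq⟩ := h
  have hx := x.val_lt
  have hrow : (3 * q.toNat + c + d : ℤ) = x.val := by omega
  refine ⟨⟨q.toNat, by omega⟩, ?_⟩
  calc _ = ((3 * q.toNat + c + d : ℤ) : ZMod (3 * k + 2)) := by push_cast; rfl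
    _ = x := by rw [hrow, Int.cast_natCast, ZMod.natCast_zmod_val]

def diagonalSet (k : ℕ) : Set (ZMod (3 * k + 2) × ZMod n) :=
  Set.range fun p : ZMod n × Fin (k + 1) =>
    (((3 * p.2 + columnOffset h3 p.1 : ℤ) : ZMod (3 * k + 2)), p.1)

theorem ncard_diagonalSet_le [NeZero n] (k : ℕ) : (diagonalSet h3 k).ncard ≤ n * (k + 1) := by
  calc (diagonalSet h3 k).ncard ≤ Nat.card (ZMod n × Fin (k + 1)) := Finite.card_range_le _
    _ = n * (k + 1) := by simp

theorem isDomSet_diagonalSet (k : ℕ) :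
    IsDomSet (prodArc (cycArc (3 * k + 2)) (cycArc n)) (diagonalSet h3 k) := by
  rintro ⟨x, y⟩
  have hc := columnOffset_mem_Icc h3 y
  have hc' := columnOffset_mem_Icc h3 (y - 1)
  have hshift := dvd_columnOffset_sub_one h3 y
  rcases (by omega : (3 : ℤ) ∣ x.val - columnOffset h3 y ∨
      (3 : ℤ) ∣ x.val - columnOffset h3 y - 1 ∨
      (3 : ℤ) ∣ x.val - columnOffset h3 (y - 1)) with h | h | h
  · obtain ⟨i, hi⟩ := exists_fin_intCast_add_eq k x hc (d := 0) zero_le_one (by simpa using h)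
    exact ⟨_, ⟨(y, i), rfl⟩, Or.inl (by simpa using hi)⟩
  · obtain ⟨i, hi⟩ := exists_fin_intCast_add_eq k x hc (d := 1) le_rfl (by exact_mod_cast h)
    exact ⟨_, ⟨(y, i), rfl⟩, Or.inr (Or.inl ⟨by simpa [cycArc] using hi.symm, rfl⟩)⟩
  · obtain ⟨i, hi⟩ := exists_fin_intCast_add_eq k x hc' (d := 0) zero_le_one (by simpa using h)
    exact ⟨_, ⟨(y - 1, i), rfl⟩,
      Or.inr (Or.inr ⟨(sub_add_cancel y 1).symm, by simpa using hi⟩)⟩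

end Construction

theorem stmt_8_general (m n k₁ : ℕ) (hn : 2 ≤ n)
    (hmmod : m % 3 = 2) (hk₁ : k₁ = m / 3) (hnmod : n % 3 = 0) :
    domNum (ZMod m × ZMod n) (prodArc (cycArc m) (cycArc n)) = n * (k₁ + 1) := by
  have : NeZero n := ⟨by omega⟩
  have h3n : 3 ∣ n := Nat.dvd_of_mod_eq_zero hnmod
  obtain rfl : m = 3 * k₁ + 2 := by omega
  exact le_antisymm
    ((domNum_le_ncard _ (isDomSet_diagonalSet h3n k₁)).trans (ncard_diagonalSet_le h3n k₁))
    (mul_succ_le_domNum k₁ n)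

theorem stmt_8 (m n k₁ : ℕ) (hm : 2 ≤ m) (hn : 2 ≤ n)
    (hmmod : m % 3 = 2) (hk₁ : k₁ = m / 3) (hnmod : n % 3 = 0) :
    domNum (ZMod m × ZMod n) (prodArc (cycArc m) (cycArc n)) = n * (k₁ + 1) :=
  stmt_8_general m n k₁ hn hmmod hk₁ hnmod
end

section
/- Let m, n ≥ 2 with m ≡ 2 (mod 3), k_1 = ⌊m/3⌋, n = 3k_2 + 1, and 2k_2 < k_1. Then γ(C_m □ C_n) > n(k_1 + 1). -/
/-!
Count dominating vertices row by row, writing `r x` for the number of them in row `x`. Row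
`x + 1` is dominated only from rows `x` and `x + 1`, and a vertex dominates at most two vertices
of its own row, so `n ≤ 2 r (x + 1) + r x`. When `n ≡ 1 (mod 3)` the numbers `f x = 3 r x - n`
are `≡ 2 (mod 3)` and satisfy `2 f (x + 1) + f x ≥ 0`, so each negative value of `f` is preceded
by a value that is at least `2` and cancels it with at least `1` to spare. Hence `2 ∑ f ≥ m`,
i.e. `6 |W| ≥ m (2n + 1)`, and for `m = 3k₁ + 2`, `n = 3k₂ + 1` this exceeds `6 n (k₁ + 1)` by
`3 (k₁ - 2k₂)`.
-/

theorem Set.ncard_eq_sum_ncard_preimage_prodMk {α β : Type*} [Fintype α] [Fintype β]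
    (W : Set (α × β)) : W.ncard = ∑ x, (Prod.mk x ⁻¹' W).ncard := by
  classical
  change W.ncard = ∑ x, {y | (x, y) ∈ W}.ncard
  simp only [Set.ncard_eq_toFinset_card', Set.toFinset_ofPred, Finset.card_filter]
  rw [← Fintype.sum_prod_type (fun p => if p ∈ W then 1 else 0), ← Finset.card_filter]
  congr 1
  ext
  simp

theorem card_le_two_mul_sum_of_mod_three {α : Type*} [Fintype α] (σ : Equiv.Perm α) (f : α → ℤ)
    (hmod : ∀ x, f x % 3 = 2) (hstep : ∀ x, 0 ≤ 2 * f (σ x) + f x) :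
    (Fintype.card α : ℤ) ≤ 2 * ∑ x, f x := by
  -- `ψ` charges each negative `f x` to the `σ`-predecessor of `x`; its increments telescope.
  let ψ : α → ℤ := fun x => if f x ≤ -1 then 2 * f x - 1 else 0
  have hterm : ∀ x, 0 ≤ 2 * f x - 1 + (ψ (σ x) - ψ x) := fun x => by
    have := hmod x
    have := hmod (σ x)
    have := hstep x
    simp only [ψ]
    split_ifs <;> omega
  have htel : ∑ x, (ψ (σ x) - ψ x) = 0 := by
    rw [Finset.sum_sub_distrib, Equiv.sum_comp σ ψ, sub_self]
  have := Finset.sum_nonneg fun x (_ : x ∈ Finset.univ) => hterm x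
  rw [Finset.sum_add_distrib, htel, Finset.sum_sub_distrib, ← Finset.mul_sum] at this
  simpa using this

theorem lt_domNum_of_forall {α : Type*} {A : α → α → Prop} {k : ℕ}
    (h : ∀ W, IsDomSet A W → k < W.ncard) : k < domNum α A := by
  refine le_csInf (s := {k | ∃ W : Set α, IsDomSet A W ∧ W.ncard = k})
    ⟨_, Set.univ, fun v => ⟨v, trivial, Or.inl rfl⟩, rfl⟩ ?_
  rintro _ ⟨W, hW, rfl⟩
  exact h W hW

namespace IsDomSet

variable {m n : ℕ} {W : Set (ZMod m × ZMod n)}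

theorem le_two_mul_ncard_prodMk_preimage_add [NeZero n]
    (hW : IsDomSet (prodArc (cycArc m) (cycArc n)) W) (x : ZMod m) :
    n ≤ 2 * (Prod.mk (x + 1) ⁻¹' W).ncard + (Prod.mk x ⁻¹' W).ncard := by
  set A := Prod.mk (x + 1) ⁻¹' W
  set B := Prod.mk x ⁻¹' W
  have hcover : Set.univ ⊆ A ∪ (· + 1) '' A ∪ B := by
    intro y _
    obtain ⟨⟨a, b⟩, hab, h⟩ := hW (x + 1, y)
    simp only [prodArc, cycArc, Prod.mk.injEq, add_left_inj] at h
    rcases h with ⟨rfl, rfl⟩ | ⟨⟨rfl, rfl⟩ | ⟨rfl, rfl⟩⟩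
    · exact Or.inl (Or.inl hab)
    · exact Or.inr hab
    · exact Or.inl (Or.inr ⟨b, hab, rfl⟩)
  have hcard : n = (Set.univ : Set (ZMod n)).ncard := by rw [Set.ncard_univ, Nat.card_zmod]
  have := Set.ncard_le_ncard hcover
  have := Set.ncard_union_le (A ∪ (· + 1) '' A) B
  have := Set.ncard_union_le A ((· + 1) '' A)
  have := Set.ncard_image_le (f := (· + 1)) A.toFinite
  omega

theorem mul_two_mul_add_one_le_six_mul_ncard [NeZero m] [NeZero n] (hn : n % 3 = 1)
    (hW : IsDomSet (prodArc (cycArc m) (cycArc n)) W) :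
    m * (2 * n + 1) ≤ 6 * W.ncard := by
  let f : ZMod m → ℤ := fun x => 3 * (Prod.mk x ⁻¹' W).ncard - n
  have hbound := card_le_two_mul_sum_of_mod_three (Equiv.addRight 1) f
    (fun x => by simp only [f]; omega)
    (fun x => by
      have := hW.le_two_mul_ncard_prodMk_preimage_add x
      simp only [f, Equiv.coe_addRight]
      omega)
  have hsum : ∑ x, f x = 3 * W.ncard - m * n := by
    simp only [f, Finset.sum_sub_distrib, ← Finset.mul_sum, ← Nat.cast_sum,
      ← Set.ncard_eq_sum_ncard_preimage_prodMk, Finset.sum_const, Finset.card_univ, ZMod.card,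
      nsmul_eq_mul]
    push_cast
    ring
  rw [hsum, ZMod.card] at hbound
  have : (m : ℤ) * (2 * n + 1) ≤ 6 * W.ncard := by linarith
  exact_mod_cast this

end IsDomSet

theorem stmt_10_general (m n k₁ k₂ : ℕ)
    (hmmod : m % 3 = 2) (hk₁ : k₁ = m / 3) (hn' : n = 3 * k₂ + 1)
    (hk : 2 * k₂ < k₁) :
    n * (k₁ + 1) < domNum (ZMod m × ZMod n) (prodArc (cycArc m) (cycArc n)) := by
  have : NeZero m := ⟨by omega⟩
  have : NeZero n := ⟨by omega⟩
  refine lt_domNum_of_forall fun W hW => ?_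
  have hbound := hW.mul_two_mul_add_one_le_six_mul_ncard (by omega)
  obtain rfl : m = 3 * k₁ + 2 := by omega
  subst hn'
  nlinarith

theorem stmt_10 (m n k₁ k₂ : ℕ) (hm : 2 ≤ m) (hn : 2 ≤ n)
    (hmmod : m % 3 = 2) (hk₁ : k₁ = m / 3) (hn' : n = 3 * k₂ + 1)
    (hk : 2 * k₂ < k₁) :
    n * (k₁ + 1) < domNum (ZMod m × ZMod n) (prodArc (cycArc m) (cycArc n)) :=
  stmt_10_general m n k₁ k₂ hmmod hk₁ hn' hk
end

section
/- Let m, n ≥ 2 with m ≡ 2 (mod 3) and n ≡ 2 (mod 3), k_2 = ⌊n/3⌋, and n ≤ m. Then γ(C_m □ C_n) = m(k_2 + 1). -/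
/-!
Lower bound: a vertex `(a, b)` can only be dominated from `(a, b)`, `(a, b - 1)` or `(a - 1, b)`,
so the column sizes `x a = #(W ∩ {a} × C_n)` satisfy `2 x a + x (a - 1) ≥ n = 3k + 2`. For
`d a = x a - (k + 1)` this reads `2 d a + d (a - 1) ≥ -1`: every column with `d a < 0` is preceded
by one with `d a + d (a - 1) ≥ 0`, and pairing them gives `∑ d a ≥ 0`.

Upper bound: take `f : ℤ_m → ℤ_n` all of whose steps `f (x + 1) - f x` are `-2` or `+1`, which
exists because `m - 3j ≡ 0 (mod n)` for `j = (m + 2n)/3 ≤ m`. The `k + 1` translates `f + 3t`,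
`t ≤ k`, of its graph dominate: the vertices at height `3t + 1` above `f x` are reached from
below, those at height `3t + 2` from column `x - 1`.
-/

open Finset Function

theorem sum_nonneg_of_neg_one_le_two_mul_add_s12 {α : Type*} [Fintype α] {p : α → α}
    (hp : Injective p) {d : α → ℤ} (h : ∀ a, -1 ≤ 2 * d a + d (p a)) : 0 ≤ ∑ a, d a := by
  classical
  set D := univ.filter fun a => d a < 0
  have hdisj : Disjoint D (D.image p) := by
    simp only [disjoint_right, mem_image, mem_filter, mem_univ, true_and, D]
    rintro _ ⟨a, ha, rfl⟩
    have := h a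
    omega
  calc 0 ≤ ∑ a ∈ D, (d a + d (p a)) := sum_nonneg fun a ha => by
        have := h a
        simp only [mem_filter, D] at ha
        omega
    _ = ∑ a ∈ D ∪ D.image p, d a := by
        rw [sum_union hdisj, sum_add_distrib, sum_image hp.injOn]
    _ ≤ ∑ a, d a := sum_le_sum_of_subset_of_nonneg (subset_univ _) fun a _ ha => by
        simp only [mem_union, mem_filter, mem_univ, true_and, D, not_or] at ha
        exact not_lt.1 ha.1

theorem card_mul_le_sum_of_le_two_mul_add {α : Type*} [Fintype α] {p : α → α}
    (hp : Injective p) {x : α → ℕ} {c : ℕ} (h : ∀ a, 3 * c ≤ 2 * x a + x (p a) + 1) :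
    Fintype.card α * c ≤ ∑ a, x a := by
  have := sum_nonneg_of_neg_one_le_two_mul_add_s12 hp (d := fun a => (x a : ℤ) - c)
    fun a => by have := h a; omega
  rw [sum_sub_distrib, sum_const, card_univ, nsmul_eq_mul] at this
  exact_mod_cast sub_nonneg.1 this

theorem ncard_eq_sum_card_filter {α β : Type*} [Fintype α] [Fintype β] (W : Set (α × β))
    [DecidablePred (· ∈ W)] : W.ncard = ∑ a, #(univ.filter fun b => (a, b) ∈ W) := by
  rw [Set.ncard_eq_toFinset_card', ← Set.filter_mem_univ_eq_toFinset]
  simp only [card_filter, Fintype.sum_prod_type]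

theorem domNum_eq {α : Type*} {A : α → α → Prop} {c : ℕ}
    (hex : ∃ W, IsDomSet A W ∧ W.ncard = c) (hle : ∀ W, IsDomSet A W → c ≤ W.ncard) :
    domNum α A = c :=
  le_antisymm (Nat.sInf_le hex) (le_csInf ⟨c, hex⟩ fun _ ⟨W, hW, hc⟩ => hc ▸ hle W hW)

section CycleProduct

variable {m n : ℕ}

theorem IsDomSet.mem_or_mem_or_mem {W : Set (ZMod m × ZMod n)}
    (hW : IsDomSet (prodArc (cycArc m) (cycArc n)) W) (a : ZMod m) (b : ZMod n) :
    (a, b) ∈ W ∨ (a, b - 1) ∈ W ∨ (a - 1, b) ∈ W := by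
  obtain ⟨⟨a', b'⟩, hu, huv⟩ := hW (a, b)
  simp only [prodArc, cycArc, Prod.mk.injEq] at huv
  rcases huv with ⟨rfl, rfl⟩ | ⟨rfl, rfl⟩ | ⟨rfl, rfl⟩
  · exact .inl hu
  · exact .inr <| .inr <| by simpa using hu
  · exact .inr <| .inl <| by simpa using hu

theorem IsDomSet.le_two_mul_card_add_card [NeZero n] {W : Set (ZMod m × ZMod n)}
    [DecidablePred (· ∈ W)] (hW : IsDomSet (prodArc (cycArc m) (cycArc n)) W) (a : ZMod m) :
    n ≤ 2 * #(univ.filter fun b => (a, b) ∈ W) + #(univ.filter fun b => (a - 1, b) ∈ W) := by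
  set S := univ.filter fun b => (a, b) ∈ W
  set T := univ.filter fun b => (a - 1, b) ∈ W
  have hcover : univ ⊆ S ∪ S.image (· + 1) ∪ T := fun b _ => by
    simp only [mem_union, mem_image, mem_filter, mem_univ, true_and, S, T]
    rcases hW.mem_or_mem_or_mem a b with h | h | h
    · exact .inl <| .inl h
    · exact .inl <| .inr ⟨b - 1, h, sub_add_cancel b 1⟩
    · exact .inr h
  calc n = #(univ : Finset (ZMod n)) := by simp
    _ ≤ #(S ∪ S.image (· + 1) ∪ T) := card_le_card hcover
    _ ≤ #S + #(S.image (· + 1)) + #T :=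
      (card_union_le _ _).trans (Nat.add_le_add_right (card_union_le _ _) _)
    _ ≤ 2 * #S + #T := by have := card_image_le (s := S) (f := (· + 1)); omega

theorem IsDomSet.mul_le_ncard [NeZero m] [NeZero n] {c : ℕ} (hc : 3 * c ≤ n + 1)
    {W : Set (ZMod m × ZMod n)} (hW : IsDomSet (prodArc (cycArc m) (cycArc n)) W) :
    m * c ≤ W.ncard := by
  classical
  have := card_mul_le_sum_of_le_two_mul_add (sub_left_injective (b := (1 : ZMod m)))
    (x := fun a => #(univ.filter fun b => (a, b) ∈ W)) (c := c) fun a => by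
    have := hW.le_two_mul_card_add_card a
    omega
  rw [ZMod.card] at this
  rwa [ncard_eq_sum_card_filter]

variable [NeZero m]

def staircase (f : ZMod m → ZMod n) (k : ℕ) : Finset (ZMod m × ZMod n) :=
  (univ ×ˢ range (k + 1)).image fun q => (q.1, f q.1 + 3 * q.2)

theorem mem_staircase {f : ZMod m → ZMod n} {k : ℕ} {p : ZMod m × ZMod n} :
    p ∈ staircase f k ↔ ∃ t ≤ k, p.2 = f p.1 + 3 * t := by
  simp only [staircase, mem_image, mem_product, mem_univ, true_and, mem_range, Nat.lt_succ_iff]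
  constructor
  · rintro ⟨⟨a, t⟩, ht, rfl⟩
    exact ⟨t, ht, rfl⟩
  · rintro ⟨t, ht, hp⟩
    exact ⟨(p.1, t), ht, by rw [← hp]⟩

theorem card_staircase (f : ZMod m → ZMod n) {k : ℕ} (hk : 3 * k < n) :
    #(staircase f k) = m * (k + 1) := by
  rw [staircase, card_image_of_injOn, card_product, card_univ, ZMod.card, card_range]
  rintro ⟨a, t⟩ ht ⟨a', t'⟩ ht' heq
  simp only [coe_product, coe_univ, coe_range, Set.mem_prod, Set.mem_univ, true_and,
    Set.mem_Iio] at ht ht'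
  simp only [Prod.mk.injEq] at heq
  obtain ⟨rfl, heq⟩ := heq
  have h3t : ((3 * t : ℕ) : ZMod n) = ((3 * t' : ℕ) : ZMod n) := by
    push_cast
    linear_combination heq
  rw [ZMod.natCast_eq_natCast_iff', Nat.mod_eq_of_lt (by omega),
    Nat.mod_eq_of_lt (by omega)] at h3t
  congr 1
  omega

theorem isDomSet_staircase {f : ZMod m → ZMod n} {k : ℕ} (hn : n = 3 * k + 2)
    (hf : ∀ x, f (x + 1) = f x - 2 ∨ f (x + 1) = f x + 1) :
    IsDomSet (prodArc (cycArc m) (cycArc n)) (staircase f k) := by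
  have : NeZero n := ⟨by omega⟩
  rintro ⟨X, Y⟩
  set r := (Y - f X).val
  have hr : (r : ZMod n) = Y - f X := ZMod.natCast_zmod_val _
  have hrn : r < n := ZMod.val_lt _
  obtain ⟨t, s, hs, hts⟩ : ∃ t s, s < 3 ∧ r = 3 * t + s := ⟨r / 3, r % 3, by omega, by omega⟩
  rw [hts] at hr
  push_cast at hr
  interval_cases s
  · exact ⟨(X, Y), mem_staircase.2 ⟨t, by omega, by linear_combination -hr⟩, .inl rfl⟩
  · exact ⟨(X, Y - 1), mem_staircase.2 ⟨t, by omega, by linear_combination -hr⟩,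
      .inr <| .inr ⟨(sub_add_cancel Y 1).symm, rfl⟩⟩
  · have hX := sub_add_cancel X 1
    refine ⟨(X - 1, Y), mem_staircase.2 ?_, .inr <| .inl ⟨hX.symm, rfl⟩⟩
    rcases hf (X - 1) with h | h <;> rw [hX] at h
    · exact ⟨t, by omega, by linear_combination h - hr⟩
    · exact ⟨t + 1, by omega, by push_cast; linear_combination h - hr⟩

theorem apply_val_add_one {β : Type*} {F : ℕ → β} (hF : F m = F 0) (x : ZMod m) :
    F (x + 1).val = F (x.val + 1) := by
  have hx : (x + 1).val = (x.val + 1) % m := by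
    rw [← ZMod.val_natCast, Nat.cast_add_one, ZMod.natCast_zmod_val]
  rcases (by have := ZMod.val_lt x; omega : x.val + 1 < m ∨ x.val + 1 = m) with h | h
  · rw [hx, Nat.mod_eq_of_lt h]
  · rw [hx, h, Nat.mod_self, hF]

-- `j` steps of `-2` followed by `m - j` steps of `+1`; they close up since `m - 3j ≡ 0 (mod n)`.
theorem exists_steps_sub_two_or_add_one {j : ℕ} (hjm : j ≤ m) (hj : 3 * j ≡ m [MOD n]) :
    ∃ f : ZMod m → ZMod n, ∀ x, f (x + 1) = f x - 2 ∨ f (x + 1) = f x + 1 := by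
  set F : ℕ → ZMod n := fun a => a - 3 * (min a j : ℕ)
  have hF : ∀ a, F (a + 1) = F a - 2 ∨ F (a + 1) = F a + 1 := fun a => by
    rcases lt_or_ge a j with h | h
    · left
      simp only [F, min_eq_left h.le, min_eq_left (Nat.succ_le_of_lt h)]
      push_cast
      ring
    · right
      simp only [F, min_eq_right h, min_eq_right (h.trans a.le_succ)]
      push_cast
      ring
  have hper : F m = F 0 := by
    simp only [F, min_eq_right hjm, min_eq_left (Nat.zero_le j)]
    rw [← Nat.cast_ofNat, ← Nat.cast_mul, (ZMod.natCast_eq_natCast_iff _ _ _).2 hj]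
    simp
  exact ⟨fun x => F x.val, fun x => by simpa only [apply_val_add_one hper] using hF x.val⟩

end CycleProduct

theorem stmt_12_general (m n k₂ : ℕ)
    (hmmod : m % 3 = 2) (hnmod : n % 3 = 2) (hk₂ : k₂ = n / 3) (hmn : n ≤ m) :
    domNum (ZMod m × ZMod n) (prodArc (cycArc m) (cycArc n)) = m * (k₂ + 1) := by
  have : NeZero m := ⟨by omega⟩
  have : NeZero n := ⟨by omega⟩
  have hj : 3 * ((m + 2 * n) / 3) ≡ m [MOD n] := by
    rw [show 3 * ((m + 2 * n) / 3) = m + n * 2 by omega]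
    exact Nat.add_mul_mod_self_left m n 2
  obtain ⟨f, hf⟩ := exists_steps_sub_two_or_add_one (by omega) hj
  refine domNum_eq ⟨_, isDomSet_staircase (k := k₂) (by omega) hf, ?_⟩
    fun W hW => hW.mul_le_ncard (by omega)
  rw [Set.ncard_coe_finset, card_staircase f (by omega)]

theorem stmt_12 (m n k₂ : ℕ) (hm : 2 ≤ m) (hn : 2 ≤ n)
    (hmmod : m % 3 = 2) (hnmod : n % 3 = 2) (hk₂ : k₂ = n / 3) (hmn : n ≤ m) :
    domNum (ZMod m × ZMod n) (prodArc (cycArc m) (cycArc n)) = m * (k₂ + 1) :=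
  stmt_12_general m n k₂ hmmod hnmod hk₂ hmn
end
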